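/- arXiv:math/9712241 — 2 statements merged into one kernel-verified Lean document; each statement's English description precedes it below -/
import Mathlib

section
/- Let M be a real antisymmetric n×n matrix and define X(π) = Σ_{1≤i<j≤n} M_{π(i),π(j)} for π ∈ S_n. For a subset S of {1,…,n} and i ∈ S, set a_{i,S} = Σ_{j∈S, j>i} M_{i,j} and b_{i,S} = Σ_{j∈S, j<i} M_{j,i}. Suppose that for every subset S of {1,…,n} there exists a bijection Θ: S → S such that (1) a_{i,S} − b_{i,S} = b_{Θ(i),S} − a_{Θ(i),S} for every i ∈ S, and (2) for each i ∈ S there exists a bijection Φ_i: S∖{i} → S∖{Θ(i)} with M_{j,k} = M_{Φ_i(j),Φ_i(k)} for all j,k ∈ S∖{i}. Then the pair (X(π), X(π∘c_I)) is exchangeable when π is uniform on S_n and I is uniform on {1,…,n}: for all real a, b, the number of pairs (π, i) ∈ S_n × {1,…,n} with X(π) = a and X(π∘c_i) = b equals the number of pairs (π, i) with X(π) = b and X(π∘c_i) = a. -/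
/-- The cycle `c_i` on `Fin n` mapping `i → i+1 → ⋯ → n-1 → i` and fixing `0,…,i-1`
(0-indexed version of the cycle on `{1,…,n}` mapping `i → i+1 → ⋯ → n → i`). -/
def cyc {n : ℕ} (i : Fin n) : Equiv.Perm (Fin n) :=
  (Fin.revPerm.trans ((Fin.cycleRange i.rev).trans Fin.revPerm)).symm

/-- The number of descents of a permutation of `Fin n`: the number of indices `i`
with `i+1 < n` and `π(i) > π(i+1)`. -/
def descents {n : ℕ} (π : Equiv.Perm (Fin n)) : ℕ :=
  (Finset.univ.filter fun i : Fin (n - 1) =>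
    π ⟨i.1 + 1, by have := i.2; omega⟩ < π ⟨i.1, by have := i.2; omega⟩).card

/-- The number of inversions of a permutation of `Fin n`: the number of pairs
`i < j` with `π(i) > π(j)`. -/
def inversions {n : ℕ} (π : Equiv.Perm (Fin n)) : ℕ :=
  (Finset.univ.filter fun p : Fin n × Fin n => p.1 < p.2 ∧ π p.2 < π p.1).card

/-- `X(π) = ∑_{i<j} M_{π(i),π(j)}`. -/
def Xstat {n : ℕ} (M : Fin n → Fin n → ℝ) (π : Equiv.Perm (Fin n)) : ℝ :=
  ∑ p ∈ Finset.univ.filter (fun p : Fin n × Fin n => p.1 < p.2), M (π p.1) (π p.2)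

/-- Expectation of a statistic under the uniform measure on the symmetric group. -/
noncomputable def permExp {n : ℕ} (f : Equiv.Perm (Fin n) → ℝ) : ℝ :=
  (∑ π : Equiv.Perm (Fin n), f π) / (n.factorial : ℝ)

/-- Variance of a statistic under the uniform measure on the symmetric group. -/
noncomputable def permVar {n : ℕ} (f : Equiv.Perm (Fin n) → ℝ) : ℝ :=
  permExp (fun π => (f π - permExp f) ^ 2)

/-!
Write `X(π) = ∑ₚ r(π, p)` with `r(π, p) = ∑_{y ∈ S_p ∖ {π p}} M (π p) y` and `S_p = π {p, …, n-1}`;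
by antisymmetry `r(π, p)` is the quantity `a - b` of the hypothesis for the set `S_p`, and moving
the entry at position `i` to the end (`π ↦ π c_i`) changes `X` by `-2 r(π, i)`.
Given `(π, i)`, relabel the values in `S = S_i` by the permutation `ρ` that sends `π i` to
`Θ (π i)` and acts as `Φ_{π i}` on the rest of `S`. For `σ = ρ π` the terms at positions before
`i` are unchanged (`ρ` permutes `S_p ⊇ S`), the term at `i` changes sign (condition (1)), and the
later terms are unchanged (condition (2)); so `X(σ) = X(π c_i)` and `X(σ c_i) = X(π)`.
The map `(π, i) ↦ (σ, i)` is injective, since `S = σ {i, …, n-1}` and then `π i` are recovered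
from `σ`, so it restricts to a bijection between the two sets being counted.
-/

open Finset Equiv

theorem Set.BijOn.exists_perm {α : Type*} {f : α → α} {s : Set α} (h : Set.BijOn f s s) :
    ∃ ρ : Perm α, Set.EqOn ρ f s ∧ ∀ y ∉ s, ρ y = y := by
  classical
  exact ⟨Perm.ofSubtype (h.equiv f), fun y hy => Perm.ofSubtype_apply_of_mem _ hy,
    fun y hy => Perm.ofSubtype_apply_of_not_mem _ hy⟩

theorem exists_perm_of_bijOn_erase {α : Type*} [DecidableEq α] {S : Finset α} {x y : α}
    (hx : x ∈ S) (hy : y ∈ S) {φ : α → α} (hφ : Set.BijOn φ ↑(S.erase x) ↑(S.erase y)) :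
    ∃ ρ : Perm α, ρ x = y ∧ Set.EqOn ρ φ ↑(S.erase x) ∧ ∀ z ∉ S, ρ z = z := by
  have hupdate : Set.BijOn (Function.update φ x y) ↑(S.erase x) ↑(S.erase y) :=
    hφ.congr fun z hz => (Function.update_of_ne (Finset.ne_of_mem_erase hz) _ _).symm
  have hS : Set.BijOn (Function.update φ x y) ↑S ↑S := by
    have := hupdate.insert (a := x) (by simp)
    rwa [Function.update_self, ← coe_insert, ← coe_insert, insert_erase hx,
      insert_erase hy] at this
  obtain ⟨ρ, hρ, hfix⟩ := hS.exists_perm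
  refine ⟨ρ, by simpa using hρ (mem_coe.2 hx), fun z hz => ?_, fun z hz => hfix z (mod_cast hz)⟩
  rw [hρ (mem_coe.2 (mem_of_mem_erase hz)),
    Function.update_of_ne (Finset.ne_of_mem_erase hz)]

section RowSum

variable {α : Type*} [DecidableEq α] (M : α → α → ℝ)

def rowSum (S : Finset α) (x : α) : ℝ := ∑ y ∈ S.erase x, M x y

theorem rowSum_eq_sub [LinearOrder α] (hM : ∀ i j, M j i = -M i j) (S : Finset α) (x : α) :
    rowSum M S x = (∑ j ∈ S.filter (x < ·), M x j) - ∑ j ∈ S.filter (· < x), M j x := by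
  have hsplit : S.erase x = S.filter (x < ·) ∪ S.filter (· < x) := by
    ext y
    simp only [mem_erase, mem_union, mem_filter]
    constructor
    · rintro ⟨hne, hy⟩; rcases hne.lt_or_gt with h | h <;> simp [hy, h]
    · rintro (⟨hy, h⟩ | ⟨hy, h⟩) <;> exact ⟨by rintro rfl; exact lt_irrefl _ h, hy⟩
  have hdisj : Disjoint (S.filter (x < ·)) (S.filter (· < x)) :=
    disjoint_filter.2 fun y _ h h' => lt_asymm h h'
  rw [rowSum, hsplit, sum_union hdisj, sub_eq_add_neg, ← sum_neg_distrib]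
  exact congrArg _ (sum_congr rfl fun y _ => hM y x)

theorem rowSum_image {ρ : α → α} (hρ : Function.Injective ρ) {A : Finset α} {x : α}
    (hM : ∀ y ∈ A, M (ρ x) (ρ y) = M x y) :
    rowSum M (A.image ρ) (ρ x) = rowSum M A x := by
  rw [rowSum, ← image_erase hρ, sum_image hρ.injOn]
  exact sum_congr rfl fun y hy => hM y (mem_of_mem_erase hy)

structure IsRowFlip (S : Finset α) (x : α) (ρ : Perm α) : Prop where
  apply_of_not_mem : ∀ y ∉ S, ρ y = y
  rowSum_apply : rowSum M S (ρ x) = -rowSum M S x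
  map_erase : ∀ y ∈ S.erase x, ∀ z ∈ S.erase x, M (ρ y) (ρ z) = M y z

theorem exists_isRowFlip [LinearOrder α] (hM : ∀ i j, M j i = -M i j) {S : Finset α}
    (hS : ∃ Θ : α → α, Set.BijOn Θ ↑S ↑S ∧
      (∀ i ∈ S,
        (∑ j ∈ S.filter (fun j => i < j), M i j) - (∑ j ∈ S.filter (fun j => j < i), M j i)
          = (∑ j ∈ S.filter (fun j => j < Θ i), M j (Θ i))
            - (∑ j ∈ S.filter (fun j => Θ i < j), M (Θ i) j)) ∧
      (∀ i ∈ S, ∃ Φ : α → α, Set.BijOn Φ ↑(S.erase i) ↑(S.erase (Θ i)) ∧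
        ∀ j ∈ S.erase i, ∀ k ∈ S.erase i, M j k = M (Φ j) (Φ k))) :
    ∃ ρ : α → Perm α, Set.InjOn (fun x => ρ x x) S ∧ ∀ x ∈ S, IsRowFlip M S x (ρ x) := by
  obtain ⟨Θ, hΘ, hrow, hΦ⟩ := hS
  have hflip : ∀ x ∈ S, ∃ ρ : Perm α, ρ x = Θ x ∧ IsRowFlip M S x ρ := by
    intro x hx
    obtain ⟨φ, hφ, hφM⟩ := hΦ x hx
    obtain ⟨ρ, hρx, hρφ, hfix⟩ := exists_perm_of_bijOn_erase hx (hΘ.mapsTo hx) hφ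
    refine ⟨ρ, hρx, hfix, ?_, fun y hy z hz => ?_⟩
    · rw [hρx, rowSum_eq_sub M hM, rowSum_eq_sub M hM, hrow x hx]
      ring
    · rw [hρφ hy, hρφ hz, hφM y hy z hz]
  choose! ρ hρΘ hρ using hflip
  exact ⟨ρ, hΘ.injOn.congr fun x hx => (hρΘ x hx).symm, hρ⟩

end RowSum

theorem Finset.image_perm_of_subset {α : Type*} [DecidableEq α] {ρ : Perm α} {S A : Finset α}
    (hfix : ∀ y ∉ S, ρ y = y) (hSA : S ⊆ A) : A.image ρ = A :=
  coe_injective <| by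
    rw [coe_image]
    exact Set.image_perm fun y hy => hSA (by_contra fun h => hy (hfix y h))

section Permutations

variable {n : ℕ}

def suffixSet (π : Perm (Fin n)) (i : Fin n) : Finset (Fin n) := (Ici i).image π

theorem suffixSet_erase (π : Perm (Fin n)) (i : Fin n) :
    (suffixSet π i).erase (π i) = (Ioi i).image π := by
  rw [suffixSet, ← image_erase π.injective, Ici_erase]

theorem apply_mem_suffixSet_iff {π : Perm (Fin n)} {i j : Fin n} :
    π j ∈ suffixSet π i ↔ i ≤ j := by
  simp [suffixSet]

theorem apply_mem_suffixSet (π : Perm (Fin n)) (i : Fin n) : π i ∈ suffixSet π i :=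
  apply_mem_suffixSet_iff.2 le_rfl

theorem suffixSet_mul (ρ π : Perm (Fin n)) (i : Fin n) :
    suffixSet (ρ * π) i = (suffixSet π i).image ρ := by
  rw [suffixSet, suffixSet, image_image]
  rfl

theorem rowSum_suffixSet (M : Fin n → Fin n → ℝ) (π : Perm (Fin n)) (i : Fin n) :
    rowSum M (suffixSet π i) (π i) = ∑ q ∈ Ioi i, M (π i) (π q) := by
  rw [rowSum, suffixSet_erase, sum_image π.injective.injOn]

theorem Xstat_eq_sum_rowSum (M : Fin n → Fin n → ℝ) (π : Perm (Fin n)) :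
    Xstat M π = ∑ p, rowSum M (suffixSet π p) (π p) := by
  simp_rw [rowSum_suffixSet, Xstat, sum_filter, Fintype.sum_prod_type, ← sum_filter,
    filter_lt_eq_Ioi]

theorem cyc_symm_val : ∀ {n : ℕ} (i x : Fin n),
    ((cyc i).symm x : ℕ) = if x.1 < i.1 then x.1 else if x.1 = i.1 then n - 1 else x.1 - 1
  | n + 1, i, x => by
    have hrep : (cyc i).symm x = Fin.rev (Fin.cycleRange i.rev (Fin.rev x)) := rfl
    have hx := x.2
    have hi := i.2
    rcases lt_trichotomy x.1 i.1 with hc | hc | hc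
    · rw [if_pos hc, hrep]
      have : i.rev < x.rev := by
        rw [Fin.lt_def, Fin.val_rev, Fin.val_rev]; omega
      rw [Fin.cycleRange_of_gt this, Fin.rev_rev]
    · rw [if_neg (by omega), if_pos hc, hrep]
      have hxi : x.rev = i.rev := by rw [Fin.ext_iff, Fin.val_rev, Fin.val_rev]; omega
      rw [hxi, Fin.cycleRange_self, Fin.val_rev]; simp
    · rw [if_neg (by omega), if_neg (by omega), hrep]
      have hlt : x.rev < i.rev := by rw [Fin.lt_def, Fin.val_rev, Fin.val_rev]; omega
      rw [Fin.val_rev, Fin.coe_cycleRange_of_lt hlt, Fin.val_rev]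
      omega

theorem cyc_symm_lt_cyc_symm_iff {i r s : Fin n} :
    (cyc i).symm r < (cyc i).symm s ↔ r < s ∧ r ≠ i ∨ s = i ∧ i < r := by
  have := cyc_symm_val i r
  have := cyc_symm_val i s
  have := r.2; have := s.2
  simp only [Fin.lt_def, Fin.ext_iff, ne_eq]
  split_ifs at * <;> omega

theorem Xstat_mul_cyc (M : Fin n → Fin n → ℝ) (hM : ∀ i j, M j i = -M i j)
    (π : Perm (Fin n)) (i : Fin n) :
    Xstat M (π * cyc i) = Xstat M π - 2 * rowSum M (suffixSet π i) (π i) := by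
  have hreindex : Xstat M (π * cyc i) = ∑ r : Fin n × Fin n,
      if (cyc i).symm r.1 < (cyc i).symm r.2 then M (π r.1) (π r.2) else 0 := by
    rw [Xstat, sum_filter]
    exact Fintype.sum_equiv (prodCongr (cyc i) (cyc i)) _ _ fun p => by simp
  have hpointwise : ∀ r : Fin n × Fin n,
      (if (cyc i).symm r.1 < (cyc i).symm r.2 then M (π r.1) (π r.2) else 0)
        = (if r.1 < r.2 then M (π r.1) (π r.2) else 0)
          - (if r.1 = i ∧ i < r.2 then M (π r.1) (π r.2) else 0)
          + (if r.2 = i ∧ i < r.1 then M (π r.1) (π r.2) else 0) := by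
    intro r
    simp only [cyc_symm_lt_cyc_symm_iff]
    simp only [Fin.lt_def, Fin.ext_iff, ne_eq]
    split_ifs <;> first | (exfalso; omega) | ring
  have hout : ∑ r : Fin n × Fin n, (if r.1 = i ∧ i < r.2 then M (π r.1) (π r.2) else 0)
      = rowSum M (suffixSet π i) (π i) := by
    simp only [Fintype.sum_prod_type, ite_and]
    simp only [sum_ite_irrel, sum_const_zero, sum_ite_eq', mem_univ, if_true]
    rw [← sum_filter, filter_lt_eq_Ioi, rowSum_suffixSet]
  have hin : ∑ r : Fin n × Fin n, (if r.2 = i ∧ i < r.1 then M (π r.1) (π r.2) else 0)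
      = -rowSum M (suffixSet π i) (π i) := by
    simp only [Fintype.sum_prod_type_right, ite_and]
    simp only [sum_ite_irrel, sum_const_zero, sum_ite_eq', mem_univ, if_true]
    rw [← sum_filter, filter_lt_eq_Ioi, rowSum_suffixSet, ← sum_neg_distrib]
    exact sum_congr rfl fun q _ => hM _ _
  rw [hreindex, Fintype.sum_congr _ _ hpointwise, sum_add_distrib, sum_sub_distrib, hout, hin,
    Xstat, sum_filter]
  ring

theorem suffixSet_anti (π : Perm (Fin n)) {p q : Fin n} (h : p ≤ q) :
    suffixSet π q ⊆ suffixSet π p :=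
  image_subset_image (Ici_subset_Ici.2 h)

theorem suffixSet_subset_erase (π : Perm (Fin n)) {i p : Fin n} (h : i < p) :
    suffixSet π p ⊆ (suffixSet π i).erase (π i) := by
  rw [suffixSet_erase]
  exact image_subset_image fun q hq => mem_Ioi.2 (h.trans_le (mem_Ici.1 hq))

theorem suffixSet_mul_eq {ρ π : Perm (Fin n)} {i : Fin n}
    (hfix : ∀ y ∉ suffixSet π i, ρ y = y) : suffixSet (ρ * π) i = suffixSet π i := by
  rw [suffixSet_mul, image_perm_of_subset hfix subset_rfl]

theorem Xstat_mul_of_isRowFlip (M : Fin n → Fin n → ℝ) {π ρ : Perm (Fin n)} {i : Fin n}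
    (hρ : IsRowFlip M (suffixSet π i) (π i) ρ) :
    Xstat M (ρ * π) = Xstat M π - 2 * rowSum M (suffixSet π i) (π i) := by
  have hterm : ∀ p, rowSum M (suffixSet (ρ * π) p) ((ρ * π) p)
      = if p = i then -rowSum M (suffixSet π i) (π i) else rowSum M (suffixSet π p) (π p) := by
    intro p
    rw [suffixSet_mul, Perm.mul_apply]
    rcases lt_trichotomy p i with hp | rfl | hp
    · have hπp : π p ∉ suffixSet π i := fun h => (apply_mem_suffixSet_iff.1 h).not_gt hp
      rw [if_neg hp.ne, image_perm_of_subset hρ.apply_of_not_mem (suffixSet_anti π hp.le),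
        hρ.apply_of_not_mem _ hπp]
    · rw [if_pos rfl, image_perm_of_subset hρ.apply_of_not_mem subset_rfl, hρ.rowSum_apply]
    · have hsub := suffixSet_subset_erase π hp
      rw [if_neg hp.ne', rowSum_image M ρ.injective fun y hy =>
        hρ.map_erase _ (hsub (apply_mem_suffixSet π p)) _ (hsub hy)]
  rw [Xstat_eq_sum_rowSum, Xstat_eq_sum_rowSum, Fintype.sum_congr _ _ hterm,
    ← add_sum_erase _ _ (mem_univ i), ← add_sum_erase _ _ (mem_univ i), if_pos rfl,
    sum_congr rfl fun p hp => if_neg (ne_of_mem_erase hp)]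
  ring

theorem Xstat_exchange_of_isRowFlip (M : Fin n → Fin n → ℝ)
    (hM : ∀ i j, M j i = -M i j) {π ρ : Perm (Fin n)} {i : Fin n}
    (hρ : IsRowFlip M (suffixSet π i) (π i) ρ) :
    Xstat M (ρ * π) = Xstat M (π * cyc i) ∧ Xstat M (ρ * π * cyc i) = Xstat M π := by
  have hσ := Xstat_mul_of_isRowFlip M hρ
  refine ⟨by rw [hσ, Xstat_mul_cyc M hM], ?_⟩
  rw [Xstat_mul_cyc M hM, suffixSet_mul_eq hρ.apply_of_not_mem, Perm.mul_apply,
    hρ.rowSum_apply, hσ]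
  ring

theorem injective_suffixSet_relabel {ρ : Finset (Fin n) → Fin n → Perm (Fin n)}
    (hinj : ∀ S, Set.InjOn (fun x => ρ S x x) S)
    (hfix : ∀ S, ∀ x ∈ S, ∀ y ∉ S, ρ S x y = y) (i : Fin n) :
    Function.Injective fun π : Perm (Fin n) => ρ (suffixSet π i) (π i) * π := by
  intro π π' h
  have hmem (π : Perm (Fin n)) := apply_mem_suffixSet π i
  have hS : suffixSet π' i = suffixSet π i := by
    rw [← suffixSet_mul_eq (hfix _ _ (hmem π)), ← suffixSet_mul_eq (hfix _ _ (hmem π'))]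
    exact congrArg (suffixSet · i) h.symm
  have hx : π i = π' i := by
    refine hinj (suffixSet π i) (hmem π) (hS ▸ hmem π') ?_
    simpa [hS] using congrArg (· i) h
  simp only [hS, hx] at h
  exact mul_left_cancel h

end Permutations

/-- Suppose the antisymmetric matrix `M` is such that every subset `S` of
indices carries a bijection `Θ : S → S` with `a_{i,S} − b_{i,S} = b_{Θ(i),S} − a_{Θ(i),S}`,
and for each `i ∈ S` a bijection `Φ_i : S∖{i} → S∖{Θ(i)}` preserving the matrix entries.
Then `(X(π), X(π∘c_I))` is exchangeable for `(π, I)` uniform on `S_n × {1,…,n}`. -/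
theorem exchangeable_of_bijections {n : ℕ} (M : Fin n → Fin n → ℝ)
    (hM : ∀ i j, M j i = - M i j)
    (h : ∀ S : Finset (Fin n), ∃ Θ : Fin n → Fin n, Set.BijOn Θ ↑S ↑S ∧
      (∀ i ∈ S,
        (∑ j ∈ S.filter (fun j => i < j), M i j) - (∑ j ∈ S.filter (fun j => j < i), M j i)
          = (∑ j ∈ S.filter (fun j => j < Θ i), M j (Θ i))
            - (∑ j ∈ S.filter (fun j => Θ i < j), M (Θ i) j)) ∧
      (∀ i ∈ S, ∃ Φ : Fin n → Fin n, Set.BijOn Φ ↑(S.erase i) ↑(S.erase (Θ i)) ∧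
        ∀ j ∈ S.erase i, ∀ k ∈ S.erase i, M j k = M (Φ j) (Φ k))) :
    ∀ a b : ℝ,
      Nat.card {p : Equiv.Perm (Fin n) × Fin n //
          Xstat M p.1 = a ∧ Xstat M (p.1 * cyc p.2) = b}
        = Nat.card {p : Equiv.Perm (Fin n) × Fin n //
          Xstat M p.1 = b ∧ Xstat M (p.1 * cyc p.2) = a} := by
  choose ρ hinj hflip using fun S => exists_isRowFlip M hM (h S)
  let T : Perm (Fin n) × Fin n → Perm (Fin n) × Fin n :=
    fun p => (ρ (suffixSet p.1 p.2) (p.1 p.2) * p.1, p.2)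
  have hT : Function.Injective T := by
    rintro ⟨π, i⟩ ⟨π', i'⟩ h
    obtain ⟨hπ, rfl : i = i'⟩ := Prod.ext_iff.1 h
    exact Prod.ext (injective_suffixSet_relabel hinj
      (fun S x hx => (hflip S x hx).apply_of_not_mem) i hπ) rfl
  have hX (p : Perm (Fin n) × Fin n) :=
    Xstat_exchange_of_isRowFlip M hM (hflip _ _ (apply_mem_suffixSet p.1 p.2))
  intro a b
  refine Nat.card_congr ((Equiv.ofBijective T (Finite.injective_iff_bijective.1 hT)).subtypeEquiv
    fun p => ?_)
  simp only [Equiv.ofBijective_apply, T, (hX p).1, (hX p).2]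
  exact and_comm
end

section
/- For every n ≥ 2, every π ∈ S_n, and every 1 ≤ i ≤ n, the move random to end step changes the number of descents by at most one: |Des((π∘c_i)⁻¹) − Des(π⁻¹)| ≤ 1. -/
/-!
`(π * c_i)⁻¹ = c_i⁻¹ * π⁻¹`, and `c_i⁻¹` is increasing on the values other than `i` while sending
`i` to the largest value. Hence `c_i⁻¹ * π⁻¹` and `π⁻¹` have the same descents, except possibly
at the two positions adjacent to `π i`, where `π⁻¹` takes the value `i`: the pair ending at `π i`
can only lose its descent and the pair starting there can only gain one.
-/

open Finset

theorem Finset.card_filter_le_card_filter_add_one {α : Type*} {s : Finset α}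
    {p q r : α → Prop} [DecidablePred p] [DecidablePred q] [DecidablePred r]
    (hr : #(s.filter r) ≤ 1) (h : ∀ x ∈ s, ¬ r x → p x → q x) :
    #(s.filter p) ≤ #(s.filter q) + 1 := by
  classical
  have hsub : s.filter p ⊆ s.filter q ∪ s.filter r := by
    intro x hx
    rw [mem_filter] at hx
    by_cases hrx : r x
    · exact mem_union_right _ (mem_filter.2 ⟨hx.1, hrx⟩)
    · exact mem_union_left _ (mem_filter.2 ⟨hx.1, h x hx.1 hrx hx.2⟩)
  calc #(s.filter p) ≤ #(s.filter q ∪ s.filter r) := card_le_card hsub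
    _ ≤ #(s.filter q) + #(s.filter r) := card_union_le _ _
    _ ≤ #(s.filter q) + 1 := by omega

theorem Finset.card_filter_apply_eq_le_one {α β : Type*} [Fintype α] {g : α → β}
    (hg : Function.Injective g) (b : β) [DecidablePred (g · = b)] :
    #(univ.filter (g · = b)) ≤ 1 :=
  card_le_one.2 fun _ hx _ hy => hg ((mem_filter.1 hx).2.trans (mem_filter.1 hy).2.symm)

section MoveToTop

variable {n : ℕ} {f : Equiv.Perm (Fin n)} {a : Fin n}

theorem descents_mul_le_descents_add_one (hmono : StrictMonoOn f {a}ᶜ)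
    (htop : ∀ x, x ≠ a → f x < f a) (σ : Equiv.Perm (Fin n)) :
    descents (f * σ) ≤ descents σ + 1 := by
  refine card_filter_le_card_filter_add_one
    (r := fun k : Fin (n - 1) => σ ⟨k.1, by have := k.2; omega⟩ = a)
    (card_filter_apply_eq_le_one (fun k l h => ?_) a) fun k _ hk hdes => ?_
  · exact Fin.ext (Fin.mk.inj_iff.1 (σ.injective h))
  · simp only [Equiv.Perm.mul_apply] at hdes
    have hnext : σ ⟨k.1 + 1, by have := k.2; omega⟩ ≠ a := by
      intro h
      rw [h] at hdes
      exact (htop _ hk).not_gt hdes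
    exact (hmono.lt_iff_lt hnext hk).1 hdes

theorem descents_le_descents_mul_add_one (hmono : StrictMonoOn f {a}ᶜ)
    (htop : ∀ x, x ≠ a → f x < f a) (σ : Equiv.Perm (Fin n)) :
    descents σ ≤ descents (f * σ) + 1 := by
  refine card_filter_le_card_filter_add_one
    (r := fun k : Fin (n - 1) => σ ⟨k.1 + 1, by have := k.2; omega⟩ = a)
    (card_filter_apply_eq_le_one (fun k l h => ?_) a) fun k _ hk hdes => ?_
  · exact Fin.ext (Nat.succ_injective (Fin.mk.inj_iff.1 (σ.injective h)))
  · simp only [Equiv.Perm.mul_apply]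
    by_cases hprev : σ ⟨k.1, by have := k.2; omega⟩ = a
    · rw [hprev]
      exact htop _ hk
    · exact (hmono.lt_iff_lt hk hprev).2 hdes

end MoveToTop

theorem val_cyc_inv_apply {n : ℕ} (i x : Fin n) :
    ((cyc i)⁻¹ x : ℕ) = if x < i then (x : ℕ) else if x = i then n - 1 else (x : ℕ) - 1 := by
  rcases n with _ | m
  · exact i.elim0
  have hconj : (cyc i)⁻¹ x = (Fin.cycleRange i.rev x.rev).rev := by
    simp [cyc, Equiv.Perm.inv_def]
  rw [hconj]
  rcases lt_trichotomy x i with hlt | rfl | hgt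
  · rw [Fin.cycleRange_of_gt (Fin.rev_lt_rev.2 hlt), Fin.rev_rev, if_pos hlt]
  · simp
  · have hrev : x.rev < i.rev := Fin.rev_lt_rev.2 hgt
    have hsucc : ((x.rev + 1 : Fin (m + 1)) : ℕ) = x.rev + 1 :=
      Fin.val_add_one_of_lt (hrev.trans_le (Fin.le_last _))
    rw [Fin.cycleRange_of_lt hrev, Fin.val_rev, hsucc, Fin.val_rev,
      if_neg hgt.not_gt, if_neg hgt.ne']
    omega

theorem strictMonoOn_cyc_inv {n : ℕ} (i : Fin n) : StrictMonoOn ⇑(cyc i)⁻¹ {i}ᶜ := by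
  intro x hx y hy hxy
  have hx' : (x : ℕ) ≠ i := Fin.val_ne_of_ne hx
  have hy' : (y : ℕ) ≠ i := Fin.val_ne_of_ne hy
  rw [Fin.lt_def, val_cyc_inv_apply, val_cyc_inv_apply]
  simp only [Fin.lt_def, Fin.ext_iff] at hxy ⊢
  split_ifs <;> omega

theorem cyc_inv_lt_cyc_inv_self {n : ℕ} {i x : Fin n} (hx : x ≠ i) :
    (cyc i)⁻¹ x < (cyc i)⁻¹ i := by
  have hx' : (x : ℕ) ≠ i := Fin.val_ne_of_ne hx
  have := x.2
  rw [Fin.lt_def, val_cyc_inv_apply, val_cyc_inv_apply]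
  simp only [Fin.lt_def, Fin.ext_iff]
  split_ifs <;> omega

theorem descents_moveToEnd_diff_le_one_general {n : ℕ}
    (π : Equiv.Perm (Fin n)) (i : Fin n) :
    |(descents ((π * cyc i)⁻¹) : ℤ) - (descents π⁻¹ : ℤ)| ≤ 1 := by
  have hmono := strictMonoOn_cyc_inv i
  have htop : ∀ x, x ≠ i → (cyc i)⁻¹ x < (cyc i)⁻¹ i := fun _ => cyc_inv_lt_cyc_inv_self
  have hle := descents_mul_le_descents_add_one hmono htop π⁻¹
  have hge := descents_le_descents_mul_add_one hmono htop π⁻¹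
  rw [mul_inv_rev, abs_le]
  omega

/-- For every `n ≥ 2`, `π ∈ S_n` and `i ∈ {1,…,n}`, the move random to
end step changes the number of descents by at most one:
`|Des((π∘c_i)⁻¹) − Des(π⁻¹)| ≤ 1`. -/
theorem descents_moveToEnd_diff_le_one {n : ℕ} (hn : 2 ≤ n)
    (π : Equiv.Perm (Fin n)) (i : Fin n) :
    |(descents ((π * cyc i)⁻¹) : ℤ) - (descents π⁻¹ : ℤ)| ≤ 1 :=
  descents_moveToEnd_diff_le_one_general π i
end
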